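/- Let S ⊂ T be linear subspaces of F_2^n with S of codimension 1 in T, and let V be a subspace containing T. Then there exists a subspace U ⊇ S such that U has codimension 1 in V, T ∩ U = S, T + U = V, and min{|x| : x ∈ V \ U} ≥ (1/(dim(V) − dim(T) + 1)) · min{|y| : y ∈ T \ S}, where |·| denotes Hamming weight. -/

import Mathlib

def perp {ι : Type} [Fintype ι] (W : Submodule (ZMod 2) (ι → ZMod 2)) :
    Submodule (ZMod 2) (ι → ZMod 2) where
  carrier := {x | ∀ w ∈ W, ∑ i, x i * w i = 0}
  add_mem' := by
    intro a b ha hb w hw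
    have h1 := ha w hw
    have h2 := hb w hw
    simp only [Set.mem_setOf_eq, Pi.add_apply, add_mul, Finset.sum_add_distrib, h1, h2, add_zero]
  zero_mem' := by intro w hw; simp
  smul_mem' := by
    intro c a ha w hw
    have h1 := ha w hw
    simp only [Set.mem_setOf_eq, Pi.smul_apply, smul_eq_mul, mul_assoc, ← Finset.mul_sum, h1,
      mul_zero]

noncomputable def minWt {ι : Type} [Fintype ι] (A : Set (ι → ZMod 2)) : ℕ :=
  sInf (hammingNorm '' A)

def evenSub (n : ℕ) : Submodule (ZMod 2) (Fin n → ZMod 2) where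
  carrier := {x | ∑ i, x i = 0}
  add_mem' := by
    intro a b ha hb
    simp only [Set.mem_setOf_eq, Pi.add_apply, Finset.sum_add_distrib] at *
    simp [ha, hb]
  zero_mem' := by simp
  smul_mem' := by
    intro c a ha
    simp only [Set.mem_setOf_eq, Pi.smul_apply, smul_eq_mul, ← Finset.mul_sum] at *
    simp [ha]



open Module

lemma hn_add_le {n : ℕ} (a b : Fin n → ZMod 2) :
    hammingNorm (a + b) ≤ hammingNorm a + hammingNorm b := by
  have h := hammingDist_triangle (a + b) b 0
  have e : -b + (a + b) = a := by abel
  rw [hammingDist_zero_right, hammingDist_zero_right, hammingDist_comm (a + b) b,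
    hammingDist_eq_hammingNorm, e] at h
  exact h

lemma hn_sum_le {n : ℕ} (I : Finset (Fin n → ZMod 2)) :
    hammingNorm (∑ v ∈ I, v) ≤ ∑ v ∈ I, hammingNorm v := by
  classical
  induction I using Finset.cons_induction with
  | empty => simp
  | cons a s ha ih =>
    rw [Finset.sum_cons, Finset.sum_cons]
    exact le_trans (hn_add_le _ _) (by omega)

lemma zmod2_eq_one {c : ZMod 2} (h : c ≠ 0) : c = 1 := by revert h; revert c; decide

lemma sum_lights_mem {n k m : ℕ} (S T V : Submodule (ZMod 2) (Fin n → ZMod 2))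
    (hST : S ≤ T)
    (hmin : ∀ x, x ∈ T → x ∉ S → m ≤ hammingNorm x)
    (hk : finrank (ZMod 2) ↥(V.map T.mkQ) ≤ k) :
    ∀ I : Finset (Fin n → ZMod 2), (∀ v ∈ I, v ∈ V) →
      (∀ v ∈ I, (k + 1) * hammingNorm v < m) →
      (∑ v ∈ I, v) ∈ T → (∑ v ∈ I, v) ∈ S := by
  classical
  intro I
  induction I using Finset.strongInductionOn with
  | _ I ih =>
  intro hIV hlight hT
  by_cases hcard : I.card ≤ k + 1
  · by_contra hxS
    have hm := hmin _ hT hxS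
    have hne : I.Nonempty := by
      rcases Finset.eq_empty_or_nonempty I with h | h
      · exfalso; apply hxS; rw [h, Finset.sum_empty]; exact Submodule.zero_mem S
      · exact h
    have h1 : hammingNorm (∑ v ∈ I, v) ≤ ∑ v ∈ I, hammingNorm v := hn_sum_le I
    have h2 : ∑ v ∈ I, (k + 1) * hammingNorm v < ∑ _v ∈ I, m :=
      Finset.sum_lt_sum_of_nonempty hne (fun v hv => hlight v hv)
    rw [← Finset.mul_sum, Finset.sum_const, smul_eq_mul] at h2
    have h3 : (k+1) * m ≤ (k+1) * hammingNorm (∑ v ∈ I, v) := Nat.mul_le_mul_left _ hm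
    have h4 : (k+1) * hammingNorm (∑ v ∈ I, v) ≤ (k+1) * ∑ v ∈ I, hammingNorm v :=
      Nat.mul_le_mul_left _ h1
    have h5 : I.card * m ≤ (k+1) * m := Nat.mul_le_mul_right _ hcard
    omega
  · push_neg at hcard
    obtain ⟨v₀, hv₀⟩ : I.Nonempty := Finset.card_pos.mp (by omega)
    set I' := I.erase v₀ with hI'
    have hsubI' : I' ⊆ I := Finset.erase_subset _ _
    have hcc : I'.card = I.card - 1 := by rw [hI']; exact Finset.card_erase_of_mem hv₀
    have hcard' : k < I'.card := by omega
    set W := V.map T.mkQ with hW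
    have hdep : ¬ LinearIndependent (ZMod 2)
        (fun v : {x // x ∈ I'} =>
          (⟨T.mkQ v.1, Submodule.mem_map_of_mem (hIV v.1 (hsubI' v.2))⟩ : ↥W)) := by
      intro hli
      have := hli.fintype_card_le_finrank
      rw [Fintype.card_coe] at this
      omega
    rw [Fintype.not_linearIndependent_iff] at hdep
    obtain ⟨g, hg0, i₀, hi₀⟩ := hdep
    have hq0 : T.mkQ (∑ i : {x // x ∈ I'}, g i • (i.1 : Fin n → ZMod 2)) = 0 := by
      have := congrArg (Submodule.subtype W) hg0
      rw [map_sum, map_zero] at this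
      rw [map_sum]
      simp only [map_smul] at this ⊢
      exact this
    set J : Finset (Fin n → ZMod 2) :=
      (Finset.univ.filter (fun i : {x // x ∈ I'} => g i ≠ 0)).image Subtype.val with hJ
    have hsumJ : ∑ v ∈ J, v = ∑ i : {x // x ∈ I'}, g i • (i.1 : Fin n → ZMod 2) := by
      rw [hJ, Finset.sum_image (fun a _ b _ h => Subtype.val_injective h)]
      rw [Finset.sum_filter]
      apply Finset.sum_congr rfl
      intro i _
      by_cases hgi : g i = 0
      · simp [hgi]
      · rw [if_pos hgi, zmod2_eq_one hgi, one_smul]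
    have hJI' : J ⊆ I' := by
      intro v hv
      rw [hJ] at hv
      obtain ⟨i, _, rfl⟩ := Finset.mem_image.mp hv
      exact i.2
    have hv₀J : v₀ ∉ J := fun h => Finset.notMem_erase v₀ I (hJI' h)
    have hJI : J ⊆ I := hJI'.trans hsubI'
    have hJssub : J ⊂ I := ⟨hJI, fun h => hv₀J (h hv₀)⟩
    have hJne : J.Nonempty := ⟨i₀.1, by
      rw [hJ]; exact Finset.mem_image_of_mem _ (Finset.mem_filter.mpr ⟨Finset.mem_univ _, hi₀⟩)⟩
    have hJT : (∑ v ∈ J, v) ∈ T := by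
      rw [← Submodule.Quotient.mk_eq_zero T, ← Submodule.mkQ_apply, hsumJ]
      exact hq0
    have hJS : (∑ v ∈ J, v) ∈ S :=
      ih J hJssub (fun v hv => hIV v (hJI hv)) (fun v hv => hlight v (hJI hv)) hJT
    have hsd : ∑ v ∈ I \ J, v + ∑ v ∈ J, v = ∑ v ∈ I, v := Finset.sum_sdiff hJI
    have hsdT : (∑ v ∈ I \ J, v) ∈ T := by
      have : ∑ v ∈ I \ J, v = ∑ v ∈ I, v - ∑ v ∈ J, v := by
        rw [← hsd]; abel
      rw [this]; exact sub_mem hT (hST hJS)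
    have hsdssub : I \ J ⊂ I := Finset.sdiff_ssubset hJI hJne
    have hsdS : (∑ v ∈ I \ J, v) ∈ S :=
      ih _ hsdssub (fun v hv => hIV v (Finset.mem_sdiff.mp hv).1)
        (fun v hv => hlight v (Finset.mem_sdiff.mp hv).1) hsdT
    rw [← hsd]
    exact add_mem hsdS hJS


set_option synthInstance.maxHeartbeats 1000000 in
theorem stmt2 (n : ℕ) (S T V : Submodule (ZMod 2) (Fin n → ZMod 2))
    (hST : S ≤ T)
    (hcodim : Module.finrank (ZMod 2) ↥T = Module.finrank (ZMod 2) ↥S + 1)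
    (hTV : T ≤ V) :
    ∃ U : Submodule (ZMod 2) (Fin n → ZMod 2), S ≤ U ∧ U ≤ V ∧
      Module.finrank (ZMod 2) ↥V = Module.finrank (ZMod 2) ↥U + 1 ∧
      T ⊓ U = S ∧ T ⊔ U = V ∧
      minWt ((T : Set (Fin n → ZMod 2)) \ (S : Set (Fin n → ZMod 2))) ≤
        (Module.finrank (ZMod 2) ↥V - Module.finrank (ZMod 2) ↥T + 1) *
          minWt ((V : Set (Fin n → ZMod 2)) \ (U : Set (Fin n → ZMod 2))) := by
  classical
  set m := minWt ((T : Set (Fin n → ZMod 2)) \ (S : Set (Fin n → ZMod 2))) with hm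
  set k := Module.finrank (ZMod 2) ↥V - Module.finrank (ZMod 2) ↥T with hk
  have hmin : ∀ x, x ∈ T → x ∉ S → m ≤ hammingNorm x := fun x hxT hxS => by
    rw [hm]; exact Nat.sInf_le ⟨x, ⟨hxT, hxS⟩, rfl⟩
  have hWle : finrank (ZMod 2) ↥(V.map T.mkQ) ≤ k := by
    set f : ↥V →ₗ[ZMod 2] (Fin n → ZMod 2) ⧸ T := T.mkQ.comp V.subtype with hf
    have hrange : LinearMap.range f = V.map T.mkQ := by
      rw [hf, LinearMap.range_comp, Submodule.range_subtype]
    have hker : LinearMap.ker f = T.comap V.subtype := by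
      rw [hf, LinearMap.ker_comp, Submodule.ker_mkQ]
    have hrn := LinearMap.finrank_range_add_finrank_ker f
    have hkereq : finrank (ZMod 2) ↥(LinearMap.ker f) = finrank (ZMod 2) ↥T := by
      rw [hker]; exact (Submodule.comapSubtypeEquivOfLe hTV).finrank_eq
    rw [hrange] at hrn
    omega
  set Λ : Set (Fin n → ZMod 2) := {v | v ∈ V ∧ (k+1) * hammingNorm v < m} with hΛ
  set L : Submodule (ZMod 2) (Fin n → ZMod 2) := S ⊔ Submodule.span (ZMod 2) Λ with hL
  have hSL : S ≤ L := le_sup_left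
  have hLV : L ≤ V := sup_le (hST.trans hTV) ((Submodule.span_le).mpr (fun v hv => hv.1))
  have hΛL : Λ ⊆ (L : Set (Fin n → ZMod 2)) := fun v hv =>
    (SetLike.le_def.mp (le_sup_right (α := Submodule (ZMod 2) (Fin n → ZMod 2))))
      (Submodule.subset_span hv)
  have hLT : ∀ x, x ∈ L → x ∈ T → x ∈ S := by
    intro x hxL hxT
    obtain ⟨s, hs, y, hy, rfl⟩ := Submodule.mem_sup.mp hxL
    have hyT : y ∈ T := by
      have h : y = s + y - s := by abel
      rw [h]; exact sub_mem hxT (hST hs)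
    obtain ⟨c, hcsupp, hcsum⟩ := Submodule.mem_span_set.mp hy
    have hysum : y = ∑ v ∈ c.support, v := by
      rw [← hcsum, Finsupp.sum]
      apply Finset.sum_congr rfl
      intro v hv
      rw [zmod2_eq_one (Finsupp.mem_support_iff.mp hv), one_smul]
    have hyS : y ∈ S := by
      rw [hysum]
      exact sum_lights_mem S T V hST hmin hWle c.support
        (fun v hv => (hcsupp hv).1) (fun v hv => (hcsupp hv).2)
        (by rw [← hysum]; exact hyT)
    exact add_mem hs hyS
  have hTS : ¬ (T ≤ S) := by
    intro h
    have h2 : S = T := le_antisymm hST h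
    rw [h2] at hcodim; omega
  obtain ⟨t, htT, htS⟩ := SetLike.not_le_iff_exists.mp hTS
  have htL : t ∉ L := fun h => htS (hLT t h htT)
  have hfin : Finite (Submodule (ZMod 2) (Fin n → ZMod 2)) :=
    Finite.of_injective _ SetLike.coe_injective
  set 𝒮 : Set (Submodule (ZMod 2) (Fin n → ZMod 2)) := {U | L ≤ U ∧ U ≤ V ∧ t ∉ U} with h𝒮
  obtain ⟨U, hU𝒮, hUmax'⟩ :=
    Set.Finite.exists_maximalFor id 𝒮 (Set.toFinite 𝒮) ⟨L, le_refl L, hLV, htL⟩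
  have hUmax : ∀ U' ∈ 𝒮, id U ≤ id U' → id U = id U' :=
    fun U' h1 h2 => le_antisymm h2 (hUmax' h1 h2)
  obtain ⟨hLU, hUV, htU⟩ := hU𝒮
  have hVsup : V = U ⊔ Submodule.span (ZMod 2) {t} := by
    apply le_antisymm
    · intro v hvV
      by_cases hvU : v ∈ U
      · exact Submodule.mem_sup_left hvU
      · have htUv : t ∈ U ⊔ Submodule.span (ZMod 2) {v} := by
          by_contra htUv
          have hmem : (U ⊔ Submodule.span (ZMod 2) {v}) ∈ 𝒮 :=
            ⟨hLU.trans le_sup_left,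
             sup_le hUV ((Submodule.span_le).mpr (Set.singleton_subset_iff.mpr hvV)), htUv⟩
          have heq := hUmax _ hmem le_sup_left
          simp only [id] at heq
          apply hvU
          rw [heq]
          exact Submodule.mem_sup_right (Submodule.mem_span_singleton_self v)
        obtain ⟨u, hu, z, hz, huz⟩ := Submodule.mem_sup.mp htUv
        obtain ⟨c, rfl⟩ := Submodule.mem_span_singleton.mp hz
        have hc : c ≠ 0 := by
          rintro rfl
          rw [zero_smul, add_zero] at huz
          exact htU (huz ▸ hu)
        rw [zmod2_eq_one hc, one_smul] at huz
        have hveq : v = t - u := by rw [← huz]; abel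
        rw [hveq]
        exact sub_mem (Submodule.mem_sup_right (Submodule.mem_span_singleton_self t))
          (Submodule.mem_sup_left hu)
    · exact sup_le hUV ((Submodule.span_le).mpr (Set.singleton_subset_iff.mpr (hTV htT)))
  have htne : t ≠ 0 := fun h => htU (h ▸ U.zero_mem)
  have hUltV : U < V := lt_of_le_of_ne hUV (fun h => htU (by rw [h]; exact hTV htT))
  have hflt : finrank (ZMod 2) ↥U < finrank (ZMod 2) ↥V := Submodule.finrank_lt_finrank_of_lt hUltV
  have hfle : finrank (ZMod 2) ↥V ≤ finrank (ZMod 2) ↥U + 1 := by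
    have h1 := Submodule.finrank_sup_add_finrank_inf_eq U (Submodule.span (ZMod 2) {t})
    rw [finrank_span_singleton htne] at h1
    rw [hVsup]
    omega
  have hrankVU : finrank (ZMod 2) ↥V = finrank (ZMod 2) ↥U + 1 := by omega
  have hTU : T ⊓ U = S := by
    apply le_antisymm
    · rintro x ⟨hxT, hxU⟩
      by_contra hxS
      have hlt : S < S ⊔ Submodule.span (ZMod 2) {x} := by
        apply lt_of_le_of_ne le_sup_left
        intro h
        apply hxS
        have hx : x ∈ S ⊔ Submodule.span (ZMod 2) {x} :=
          Submodule.mem_sup_right (Submodule.mem_span_singleton_self x)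
        rwa [← h] at hx
      have hle : S ⊔ Submodule.span (ZMod 2) {x} ≤ T :=
        sup_le hST ((Submodule.span_le).mpr (Set.singleton_subset_iff.mpr hxT))
      have heq : S ⊔ Submodule.span (ZMod 2) {x} = T := by
        apply Submodule.eq_of_le_of_finrank_le hle
        have h2 := Submodule.finrank_lt_finrank_of_lt hlt
        omega
      apply htU
      rw [← heq] at htT
      rcases Submodule.mem_sup.mp htT with ⟨s, hs, z, hz, rfl⟩
      obtain ⟨c, rfl⟩ := Submodule.mem_span_singleton.mp hz
      exact add_mem (hLU (hSL hs)) (Submodule.smul_mem _ _ hxU)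
    · exact le_inf hST (hSL.trans hLU)
  have hTUV : T ⊔ U = V := by
    apply le_antisymm (sup_le hTV hUV)
    rw [hVsup]
    exact sup_le le_sup_right
      ((Submodule.span_le).mpr (Set.singleton_subset_iff.mpr (Submodule.mem_sup_left htT)))
  refine ⟨U, hSL.trans hLU, hUV, hrankVU, hTU, hTUV, ?_⟩
  have himne : (hammingNorm ''
      ((V : Set (Fin n → ZMod 2)) \ (U : Set (Fin n → ZMod 2)))).Nonempty :=
    ⟨hammingNorm t, t, ⟨hTV htT, htU⟩, rfl⟩
  obtain ⟨v, ⟨hvV, hvU⟩, hveq⟩ := Nat.sInf_mem himne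
  have hvlight : ¬ ((k+1) * hammingNorm v < m) := fun h => hvU (hLU (hΛL ⟨hvV, h⟩))
  push_neg at hvlight
  show m ≤ (k + 1) * minWt ((V : Set (Fin n → ZMod 2)) \ (U : Set (Fin n → ZMod 2)))
  have : minWt ((V : Set (Fin n → ZMod 2)) \ (U : Set (Fin n → ZMod 2))) = hammingNorm v := by
    rw [minWt, ← hveq]
  rw [this]
  exact hvlight
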